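/- arXiv:2507.12635 — 3 statements merged into one kernel-verified Lean document; each statement's English description precedes it below -/
import Mathlib

section
/- If a feasible basic solution to a linear program contains, for each tiny job j ∈ T, variables y_{j1},...,y_{jm} ≥ 0 with Σ_i y_{ji} = 1, and for each safe job j ∈ S, variables x_j, y_{j1},...,y_{jm} ≥ 0 with x_j + Σ_i y_{ji} = 1, plus m+1 additional constraints (so |T|+|S|+m+1 constraints total), and the number of nonzero variables is at most the number of constraints, then the number of jobs whose variables are all strictly fractional (i.e., tiny jobs with no y_{ji} = 1, and safe jobs with neither x_j = 1 nor any y_{ji} = 1) is at most m+1. -/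
/-!
Each tiny job has at least one nonzero variable, since its variables sum to `1`; a strictly
fractional one has at least two, since a single nonzero variable would have to equal `1`.
The same holds for a safe job, counting `x j` together with the `y j i`. Summing over all
jobs, the nonzero variables number at least `|T| + |S|` plus the number of strictly
fractional jobs, and the sparsity bound of a basic solution leaves room for at most `m + 1`
of the latter.
-/

open Finset

section Support

variable {α M : Type*} [AddCommMonoid M] [DecidableEq M] {s : Finset α} {f : α → M} {a c : M}

lemma one_le_card_filter_ne_zero_of_sum_ne_zero (h : ∑ i ∈ s, f i ≠ 0) :
    1 ≤ #(s.filter (f · ≠ 0)) := by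
  obtain ⟨i, hi, hfi⟩ := exists_ne_zero_of_sum_ne_zero h
  exact card_pos.mpr ⟨i, mem_filter.mpr ⟨hi, hfi⟩⟩

lemma two_le_card_filter_ne_zero_of_sum_eq (hc : c ≠ 0) (h : ∑ i ∈ s, f i = c)
    (hf : ∀ i ∈ s, f i ≠ c) : 2 ≤ #(s.filter (f · ≠ 0)) := by
  rw [← sum_filter_ne_zero] at h
  by_contra! hcard
  obtain hzero | hone : #(s.filter (f · ≠ 0)) = 0 ∨ #(s.filter (f · ≠ 0)) = 1 := by omega
  · rw [card_eq_zero.mp hzero, sum_empty] at h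
    exact hc h.symm
  · obtain ⟨i, hi⟩ := card_eq_one.mp hone
    have hmem : i ∈ s := (mem_filter.mp (hi ▸ mem_singleton_self i)).1
    rw [hi, sum_singleton] at h
    exact hf i hmem h

lemma one_le_card_filter_ne_zero_add_of_add_sum_eq (hc : c ≠ 0) (h : a + ∑ i ∈ s, f i = c) :
    1 ≤ #(s.filter (f · ≠ 0)) + if a ≠ 0 then 1 else 0 := by
  by_cases ha : a = 0
  · subst ha
    rw [zero_add] at h
    simpa using one_le_card_filter_ne_zero_of_sum_ne_zero (h ▸ hc)
  · simp [ha]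

lemma two_le_card_filter_ne_zero_add_of_add_sum_eq (hc : c ≠ 0) (h : a + ∑ i ∈ s, f i = c)
    (ha : a ≠ c) (hf : ∀ i ∈ s, f i ≠ c) :
    2 ≤ #(s.filter (f · ≠ 0)) + if a ≠ 0 then 1 else 0 := by
  by_cases ha0 : a = 0
  · subst ha0
    rw [zero_add] at h
    simpa using two_le_card_filter_ne_zero_of_sum_eq hc h hf
  · have hsum : ∑ i ∈ s, f i ≠ 0 := fun hzero => ha (by rwa [hzero, add_zero] at h)
    simpa [ha0] using one_le_card_filter_ne_zero_of_sum_ne_zero hsum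

end Support

lemma card_add_card_filter_le_sum {ι : Type*} (s : Finset ι) (p : ι → Prop) [DecidablePred p]
    (n : ι → ℕ) (h₁ : ∀ j ∈ s, 1 ≤ n j) (h₂ : ∀ j ∈ s, p j → 2 ≤ n j) :
    #s + #(s.filter p) ≤ ∑ j ∈ s, n j := by
  rw [card_filter, card_eq_sum_ones, ← sum_add_distrib]
  refine sum_le_sum fun j hj => ?_
  split_ifs with hp
  exacts [h₂ j hj hp, h₁ j hj]

theorem stmt1_general {ι : Type*} [DecidableEq ι] (m : ℕ)
    (T S : Finset ι) (hTS : Disjoint T S)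
    (x : ι → ℝ) (y : ι → Fin m → ℝ)
    (hT : ∀ j ∈ T, ∑ i, y j i = 1)
    (hS : ∀ j ∈ S, x j + ∑ i, y j i = 1)
    (hbasic :
      (∑ j ∈ T ∪ S, (Finset.univ.filter (fun i : Fin m => y j i ≠ 0)).card)
        + (S.filter (fun j => x j ≠ 0)).card
        ≤ T.card + S.card + m + 1) :
    (T.filter (fun j => ∀ i, y j i < 1)).card
      + (S.filter (fun j => x j < 1 ∧ ∀ i, y j i < 1)).card ≤ m + 1 := by
  have hTcount := card_add_card_filter_le_sum T (fun j => ∀ i, y j i < 1)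
    (fun j => #(univ.filter (y j · ≠ 0)))
    (fun j hj => one_le_card_filter_ne_zero_of_sum_ne_zero ((hT j hj).symm ▸ one_ne_zero))
    (fun j hj hfrac => two_le_card_filter_ne_zero_of_sum_eq one_ne_zero (hT j hj)
      fun i _ => (hfrac i).ne)
  have hScount := card_add_card_filter_le_sum S (fun j => x j < 1 ∧ ∀ i, y j i < 1)
    (fun j => #(univ.filter (y j · ≠ 0)) + if x j ≠ 0 then 1 else 0)
    (fun j hj => one_le_card_filter_ne_zero_add_of_add_sum_eq one_ne_zero (hS j hj))
    (fun j hj hfrac => two_le_card_filter_ne_zero_add_of_add_sum_eq one_ne_zero (hS j hj)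
      hfrac.1.ne fun i _ => (hfrac.2 i).ne)
  rw [sum_add_distrib, ← card_filter] at hScount
  rw [sum_union hTS] at hbasic
  omega

/-- In a basic feasible solution of the LP with `|T|+|S|+m+1` constraints
(for tiny jobs `j ∈ T`: variables `y j i ≥ 0` with `∑ i, y j i = 1`; for safe jobs
`j ∈ S`: variables `x j ≥ 0` and `y j i ≥ 0` with `x j + ∑ i, y j i = 1`), if the
number of nonzero variables is at most the number of constraints, then the number of
jobs all of whose variables are strictly fractional is at most `m+1`. -/
theorem stmt1 {ι : Type*} [DecidableEq ι] (m : ℕ) (hm : 1 ≤ m)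
    (T S : Finset ι) (hTS : Disjoint T S)
    (x : ι → ℝ) (y : ι → Fin m → ℝ)
    (hxnn : ∀ j ∈ S, 0 ≤ x j)
    (hynn : ∀ j ∈ T ∪ S, ∀ i, 0 ≤ y j i)
    (hT : ∀ j ∈ T, ∑ i, y j i = 1)
    (hS : ∀ j ∈ S, x j + ∑ i, y j i = 1)
    (hbasic :
      (∑ j ∈ T ∪ S, (Finset.univ.filter (fun i : Fin m => y j i ≠ 0)).card)
        + (S.filter (fun j => x j ≠ 0)).card
        ≤ T.card + S.card + m + 1) :
    (T.filter (fun j => ∀ i, y j i < 1)).card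
      + (S.filter (fun j => x j < 1 ∧ ∀ i, y j i < 1)).card ≤ m + 1 :=
  stmt1_general m T S hTS x y hT hS hbasic
end

section
/- Under list scheduling, if a set A of jobs is scheduled on m machines by repeatedly assigning each job to a currently least-loaded machine, then the final makespan is at most (1/m)·Σ_{j∈A} p_j + max_{j∈A} p_j. -/
/-!
Induct along the list. When job `a` is placed, its machine carries a minimal load, hence at most
the average `T / m` of the total load `T` of the jobs placed so far; after placing `a` that machine
carries at most `T / m + p a`, which is within the bound, and no other load changes. Since
processing times are nonnegative, the bound itself only grows as jobs are added.
-/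

namespace ListScheduling

variable {ι : Type*} {m : ℕ} (f : ι → Fin m) (p : ι → ℝ)

def load (t : List ι) (i : Fin m) : ℝ :=
  ((t.filter (fun j => f j = i)).map p).sum

theorem load_nil (i : Fin m) : load f p [] i = 0 := rfl

theorem load_append_singleton (t : List ι) (a : ι) (i : Fin m) :
    load f p (t ++ [a]) i = load f p t i + if f a = i then p a else 0 := by
  by_cases h : f a = i <;> simp [load, List.filter_append, h]

theorem sum_load (t : List ι) : ∑ i, load f p t i = (t.map p).sum := by
  induction t using List.reverseRecOn with
  | nil => simp [load_nil]
  | append_singleton t a ih =>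
    simp [load_append_singleton, Finset.sum_add_distrib, ih]

theorem load_le_average_of_forall_le {t : List ι} {i₀ : Fin m}
    (hmin : ∀ i, load f p t i₀ ≤ load f p t i) :
    load f p t i₀ ≤ 1 / (m : ℝ) * (t.map p).sum := by
  have hm : (0 : ℝ) < m := by exact_mod_cast i₀.pos
  have hsum : (m : ℝ) * load f p t i₀ ≤ (t.map p).sum := by
    rw [← sum_load]
    simpa using Finset.card_nsmul_le_sum Finset.univ _ _ fun i _ => hmin i
  rw [one_div_mul_eq_div, le_div_iff₀ hm]
  linarith

theorem load_take_le {l : List ι} {M : ℝ} (hM₀ : 0 ≤ M)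
    (hp : ∀ j ∈ l, 0 ≤ p j) (hM : ∀ j ∈ l, p j ≤ M)
    (hLS : ∀ k : Fin l.length, ∀ i, load f p (l.take k) (f (l.get k)) ≤ load f p (l.take k) i)
    {n : ℕ} (hn : n ≤ l.length) (i : Fin m) :
    load f p (l.take n) i ≤ 1 / (m : ℝ) * ((l.take n).map p).sum + M := by
  induction n generalizing i with
  | zero => simpa [load_nil] using hM₀
  | succ n ih =>
    have hnl : n < l.length := hn
    have ha : l[n] ∈ l := List.getElem_mem hnl
    have hpa := hp _ ha
    have hdiv : 0 ≤ 1 / (m : ℝ) * p l[n] := by positivity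
    rw [← List.take_concat_get' l n hnl, load_append_singleton, List.map_append,
      List.sum_append, List.map_singleton, List.sum_singleton, mul_add]
    split_ifs with hi
    · subst hi
      have hmin := load_le_average_of_forall_le f p (hLS ⟨n, hnl⟩)
      have hpaM := hM _ ha
      simp only [List.get_eq_getElem] at hmin
      linarith
    · have hload := ih hnl.le i
      linarith

end ListScheduling

open ListScheduling in
/-- List scheduling. The jobs of the list `l` (with distinct jobs, set `A =
l.toFinset`) are assigned one at a time by `f` to the `m` machines; the hypothesis `hLS`
says each job goes to a machine whose current load (total processing time of earlier jobs
of the list assigned to it) is minimal. Then every final machine load (hence the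
makespan) is at most `(1/m)·∑_{j∈A} p j + max_{j∈A} p j`. -/
theorem stmt9 {ι : Type*} [DecidableEq ι] (m : ℕ)
    (p : ι → ℝ) (l : List ι) (hl : l ≠ [])
    (hp : ∀ j ∈ l, 0 ≤ p j)
    (f : ι → Fin m)
    (hLS : ∀ k : Fin l.length, ∀ i : Fin m,
      (((l.take k).filter (fun j => f j = f (l.get k))).map p).sum
        ≤ (((l.take k).filter (fun j => f j = i)).map p).sum) :
    ∀ i : Fin m,
      ((l.filter (fun j => f j = i)).map p).sum
        ≤ (1 / (m : ℝ)) * (l.map p).sum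
          + l.toFinset.sup' (by simpa using hl) p := by
  intro i
  have hM : ∀ j ∈ l, p j ≤ l.toFinset.sup' (by simpa using hl) p :=
    fun j hj => Finset.le_sup' p (List.mem_toFinset.mpr hj)
  obtain ⟨j, hj⟩ := List.exists_mem_of_ne_nil l hl
  have hM₀ := (hp j hj).trans (hM j hj)
  simpa only [load, List.take_length] using load_take_le f p hM₀ hp hM hLS le_rfl i
end

section
/- Let B_1, ..., B_d be finite lists of jobs, where within each B_i all jobs have the same penalty and jobs are sorted in non-increasing order of processing time. For any feasible solution that rejects exactly k_i jobs from each B_i, there exists a feasible solution of cost at most as large that rejects exactly the first k_i jobs (those with largest processing times) of each B_i. -/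
/-!
Exchange argument. If a group `B i` rejects a job `j'` outside its first `k i` jobs, then,
since exactly `k i` of its jobs are rejected, one of its first `k i` jobs, say `j`, is accepted.
Composing the assignment with the transposition `(j j')` hands the machine of `j` to `j'` and
rejects `j`; as `p j' ≤ p j` neither a machine load nor the accepted time grows, and as
`e j = e j'` the penalty is unchanged. Each exchange removes one misplaced rejection, so
finitely many exchanges reach the prescribed rejections.
-/

open Equiv

section Library

variable {α β : Type*}

theorem Finset.sum_filter_comp_perm [AddCommMonoid β] (π : Perm α) {s : Finset α}
    (hs : {a | π a ≠ a} ⊆ s) (P : α → Prop) [DecidablePred P] (f : α → β) :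
    ∑ x ∈ s with P (π x), f x = ∑ x ∈ s with P x, f (π.symm x) := by
  simp only [Finset.sum_filter]
  exact π.sum_comp' s (fun y x => if P y then f x else 0) hs

theorem List.countP_drop_countP_eq_countP_take_not (L : List α) (p : α → Bool) :
    (L.drop (L.countP p)).countP p = (L.take (L.countP p)).countP (fun a => !p a) := by
  have hsplit := congrArg (List.countP p) (L.take_append_drop (L.countP p))
  have hlen := List.length_eq_countP_add_countP p (l := L.take (L.countP p))
  rw [List.countP_append] at hsplit
  rw [List.length_take, min_eq_left List.countP_le_length] at hlen
  simp only [decide_not, Bool.decide_eq_true] at hlen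
  omega

variable [DecidableEq α]

theorem Equiv.setOf_swap_apply_ne_subset {a b : α} {s : Finset α} (ha : a ∈ s) (hb : b ∈ s) :
    {x | swap a b x ≠ x} ⊆ s := by
  intro x hx
  rcases (swap_apply_ne_self_iff.mp hx).2 with rfl | rfl <;> assumption

theorem List.countP_comp_swap {L : List α} (hL : L.Nodup) {a b : α} (hab : a ∈ L ↔ b ∈ L)
    (p : α → Bool) : L.countP (p ∘ Equiv.swap a b) = L.countP p := by
  rw [← List.countP_map]
  refine List.Perm.countP_eq p ?_
  rw [List.perm_ext_iff_of_nodup (hL.map (Equiv.swap a b).injective) hL]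
  intro x
  rw [List.mem_map_of_involutive (Equiv.swap_apply_self a b)]
  rcases eq_or_ne x a with rfl | hxa
  · rw [swap_apply_left]; exact hab.symm
  rcases eq_or_ne x b with rfl | hxb
  · rw [swap_apply_right]; exact hab
  rw [swap_apply_of_ne_of_ne hxa hxb]

end Library

section Scheduling

variable {ι M : Type*} {J : Finset ι} {p e : ι → ℝ}

theorem sum_filter_comp_swap_le [DecidableEq ι] {j j' : ι} (hj : j ∈ J) (hj' : j' ∈ J)
    {σ : ι → Option M} (hσ : σ j' = none) (hp : p j' ≤ p j)
    (Q : Option M → Prop) [DecidablePred Q] (hQ : ¬ Q none) :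
    ∑ x ∈ J with Q (σ (swap j j' x)), p x ≤ ∑ x ∈ J with Q (σ x), p x := by
  rw [Finset.sum_filter_comp_perm _ (setOf_swap_apply_ne_subset hj hj') (fun y => Q (σ y)),
    symm_swap]
  refine Finset.sum_le_sum fun y hy => ?_
  rcases eq_or_ne y j with rfl | hyj
  · rwa [swap_apply_left]
  have hyj' : y ≠ j' := by
    rintro rfl
    exact hQ (hσ ▸ (Finset.mem_filter.mp hy).2)
  rw [swap_apply_of_ne_of_ne hyj hyj']

variable [DecidableEq M]

variable (J p e) in
def Dominates (σ' σ : ι → Option M) : Prop :=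
  ∑ j ∈ J with σ' j ≠ none, p j ≤ ∑ j ∈ J with σ j ≠ none, p j ∧
    (∀ t, ∑ j ∈ J with σ' j = some t, p j ≤ ∑ j ∈ J with σ j = some t, p j) ∧
    ∑ j ∈ J with σ' j = none, e j = ∑ j ∈ J with σ j = none, e j

theorem Dominates.refl (σ : ι → Option M) : Dominates J p e σ σ :=
  ⟨le_rfl, fun _ => le_rfl, rfl⟩

theorem Dominates.trans {σ'' σ' σ : ι → Option M} (h₁ : Dominates J p e σ'' σ')
    (h₂ : Dominates J p e σ' σ) : Dominates J p e σ'' σ :=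
  ⟨h₁.1.trans h₂.1, fun t => (h₁.2.1 t).trans (h₂.2.1 t), h₁.2.2.trans h₂.2.2⟩

theorem dominates_comp_swap [DecidableEq ι] {j j' : ι} (hj : j ∈ J) (hj' : j' ∈ J)
    {σ : ι → Option M} (hσ : σ j' = none) (hp : p j' ≤ p j) (he : e j' = e j) :
    Dominates J p e (σ ∘ swap j j') σ := by
  refine ⟨sum_filter_comp_swap_le hj hj' hσ hp (· ≠ none) (by simp),
    fun t => sum_filter_comp_swap_le hj hj' hσ hp (· = some t) (by simp), ?_⟩
  rw [Function.comp_def, Finset.sum_filter_comp_perm _ (setOf_swap_apply_ne_subset hj hj')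
    (fun y => σ y = none), symm_swap]
  refine Finset.sum_congr rfl fun y _ => ?_
  rw [swap_apply_def]
  split_ifs with h₁ h₂
  · rw [h₁, he]
  · rw [h₂, he]
  · rfl

end Scheduling

section Groups

variable {ι M κ : Type*} (J : Finset ι) (B : κ → List ι) (k : κ → ℕ)

open Classical in
noncomputable def misplaced (σ : ι → Option M) : Finset ι :=
  J.filter fun x => σ x = none ∧ ∃ i, x ∈ (B i).drop (k i)

variable {J B k} {σ : ι → Option M}

theorem mem_misplaced {x : ι} :
    x ∈ misplaced J B k σ ↔ x ∈ J ∧ σ x = none ∧ ∃ i, x ∈ (B i).drop (k i) := by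
  classical
  simp only [misplaced, Finset.mem_filter]

theorem rejects_iff_mem_take_of_misplaced_eq_empty (hBJ : ∀ i, ∀ j ∈ B i, j ∈ J)
    (hrej : ∀ i, (B i).countP (σ · = none) = k i) (h : misplaced J B k σ = ∅)
    (i : κ) (j : ι) (hj : j ∈ B i) : σ j = none ↔ j ∈ (B i).take (k i) := by
  have hdrop : ∀ x ∈ (B i).drop (k i), σ x ≠ none := fun x hx hσx =>
    (Finset.eq_empty_iff_forall_notMem.mp h) x
      (mem_misplaced.mpr ⟨hBJ i x (List.mem_of_mem_drop hx), hσx, i, hx⟩)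
  constructor
  · intro hσj
    by_contra hjt
    rw [← (B i).take_append_drop (k i), List.mem_append] at hj
    exact hdrop j (hj.resolve_left hjt) hσj
  · intro hjt
    have hcount := List.countP_drop_countP_eq_countP_take_not (B i) (σ · = none)
    rw [hrej i, List.countP_eq_zero.mpr (by simpa using hdrop)] at hcount
    simpa using List.countP_eq_zero.mp hcount.symm j hjt

theorem exists_mem_take_of_mem_misplaced (hrej : ∀ i, (B i).countP (σ · = none) = k i)
    {j' : ι} (hj' : j' ∈ misplaced J B k σ) :
    ∃ i, ∃ j ∈ (B i).take (k i), σ j ≠ none ∧ j' ∈ (B i).drop (k i) := by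
  obtain ⟨-, hσj', i, hj'i⟩ := mem_misplaced.mp hj'
  have hcount := List.countP_drop_countP_eq_countP_take_not (B i) (σ · = none)
  rw [hrej i] at hcount
  have hpos : 0 < ((B i).drop (k i)).countP (σ · = none) :=
    List.countP_pos_iff.mpr ⟨j', hj'i, by simpa using hσj'⟩
  obtain ⟨j, hj, hσj⟩ := List.countP_pos_iff.mp (hcount ▸ hpos)
  exact ⟨i, j, hj, by simpa using hσj, hj'i⟩

theorem notMem_drop_of_mem_take (hnd : ∀ i, (B i).Nodup)
    (hdisj : ∀ i i', i ≠ i' → ∀ j ∈ B i, j ∉ B i') {i : κ} {j : ι} (hj : j ∈ (B i).take (k i))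
    (i' : κ) : j ∉ (B i').drop (k i') := by
  intro hj'
  rcases eq_or_ne i i' with rfl | hne
  · exact List.disjoint_take_drop (hnd i) le_rfl hj hj'
  · exact hdisj i i' hne j (List.mem_of_mem_take hj) (List.mem_of_mem_drop hj')

theorem misplaced_comp_swap_ssubset [DecidableEq ι] (hnd : ∀ i, (B i).Nodup)
    (hdisj : ∀ i i', i ≠ i' → ∀ j ∈ B i, j ∉ B i') {i : κ} {j j' : ι}
    (hj : j ∈ (B i).take (k i)) (hσj : σ j ≠ none) (hj' : j' ∈ misplaced J B k σ) :
    misplaced J B k (σ ∘ swap j j') ⊂ misplaced J B k σ := by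
  have hsub : misplaced J B k (σ ∘ swap j j') ⊆ misplaced J B k σ := by
    intro x hx
    obtain ⟨hxJ, hσx, i', hxi'⟩ := mem_misplaced.mp hx
    have hxj : x ≠ j := by
      rintro rfl
      exact notMem_drop_of_mem_take hnd hdisj hj i' hxi'
    have hxj' : x ≠ j' := by
      rintro rfl
      exact hσj (by simpa using hσx)
    rw [Function.comp_apply, swap_apply_of_ne_of_ne hxj hxj'] at hσx
    exact mem_misplaced.mpr ⟨hxJ, hσx, i', hxi'⟩
  refine (Finset.ssubset_iff_of_subset hsub).mpr ⟨j', hj', fun h => ?_⟩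
  exact hσj (by simpa using (mem_misplaced.mp h).2.1)

theorem countP_rejected_comp_swap [DecidableEq ι] (hnd : ∀ i, (B i).Nodup)
    (hdisj : ∀ i i', i ≠ i' → ∀ j ∈ B i, j ∉ B i') {i : κ} {j j' : ι}
    (hj : j ∈ B i) (hj' : j' ∈ B i) (i' : κ) :
    (B i').countP (fun x => (σ ∘ swap j j') x = none) = (B i').countP (σ · = none) := by
  refine List.countP_comp_swap (hnd i') ?_ (σ · = none)
  rcases eq_or_ne i i' with rfl | hne
  · exact iff_of_true hj hj'
  · exact iff_of_false (hdisj i i' hne j hj) (hdisj i i' hne j' hj')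

end Groups

theorem exists_dominates_rejects_take {ι M κ : Type*} [DecidableEq ι] [DecidableEq M]
    {J : Finset ι} {p e : ι → ℝ} {B : κ → List ι} {k : κ → ℕ}
    (hBJ : ∀ i, ∀ j ∈ B i, j ∈ J) (hnd : ∀ i, (B i).Nodup)
    (hdisj : ∀ i i', i ≠ i' → ∀ j ∈ B i, j ∉ B i')
    (hpen : ∀ i, ∀ j ∈ B i, ∀ j' ∈ B i, e j = e j')
    (hsorted : ∀ i, (B i).Pairwise (fun a b => p b ≤ p a))
    (σ : ι → Option M) (hrej : ∀ i, (B i).countP (σ · = none) = k i) :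
    ∃ σ', Dominates J p e σ' σ ∧ ∀ i, ∀ j ∈ B i, σ' j = none ↔ j ∈ (B i).take (k i) := by
  induction hW : misplaced J B k σ using Finset.strongInduction generalizing σ with
  | H W ih =>
    rcases W.eq_empty_or_nonempty with rfl | ⟨j', hj'⟩
    · exact ⟨σ, .refl σ, rejects_iff_mem_take_of_misplaced_eq_empty hBJ hrej hW⟩
    subst hW
    obtain ⟨i, j, hj, hσj, hj'i⟩ := exists_mem_take_of_mem_misplaced hrej hj'
    have hjB := List.mem_of_mem_take hj
    have hj'B := List.mem_of_mem_drop hj'i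
    obtain ⟨σ', hdom, htake⟩ := ih _ (misplaced_comp_swap_ssubset hnd hdisj hj hσj hj')
      (σ ∘ swap j j') (fun i' => (countP_rejected_comp_swap hnd hdisj hjB hj'B i').trans (hrej i')) rfl
    refine ⟨σ', hdom.trans (dominates_comp_swap (hBJ i j hjB) (hBJ i j' hj'B)
      (mem_misplaced.mp hj').2.1 ?_ (hpen i j' hj'B j hjB)), htake⟩
    exact (hsorted i).rel_of_mem_take_of_mem_drop hj hj'i

theorem stmt17_general {ι : Type*} [DecidableEq ι] (m : ℕ) [NeZero m] (d : ℕ)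
    (J : Finset ι) (p e : ι → ℝ) (U : ℝ)
    (B : Fin d → List ι) (k : Fin d → ℕ)
    (hBJ : ∀ i, ∀ j ∈ B i, j ∈ J)
    (hnd : ∀ i, (B i).Nodup)
    (hdisj : ∀ i i', i ≠ i' → ∀ j ∈ B i, j ∉ B i')
    (hpen : ∀ i, ∀ j ∈ B i, ∀ j' ∈ B i, e j = e j')
    (hsorted : ∀ i, (B i).Pairwise (fun a b => p b ≤ p a))
    (σ : ι → Option (Fin m))
    (hfeas : ∑ j ∈ J.filter (fun j => σ j ≠ none), p j ≤ U)
    (hrej : ∀ i, ((B i).filter (fun j => σ j = none)).length = k i) :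
    ∃ σ' : ι → Option (Fin m),
      (∑ j ∈ J.filter (fun j => σ' j ≠ none), p j ≤ U)
      ∧ ((Finset.univ.sup' Finset.univ_nonempty
            (fun i => ∑ j ∈ J.filter (fun j => σ' j = some i), p j))
          + ∑ j ∈ J.filter (fun j => σ' j = none), e j
          ≤ (Finset.univ.sup' Finset.univ_nonempty
            (fun i => ∑ j ∈ J.filter (fun j => σ j = some i), p j))
          + ∑ j ∈ J.filter (fun j => σ j = none), e j)
      ∧ (∀ i, ∀ j ∈ B i, (σ' j = none ↔ j ∈ (B i).take (k i))) := by
  obtain ⟨σ', ⟨hacc, hload, hpenalty⟩, htake⟩ :=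
    exists_dominates_rejects_take hBJ hnd hdisj hpen hsorted σ
      (fun i => List.countP_eq_length_filter.trans (hrej i))
  exact ⟨σ', hacc.trans hfeas,
    add_le_add (Finset.sup'_mono_fun fun t _ => hload t) hpenalty.le, htake⟩

/-- Given groups `B 1, …, B d` of jobs, each group consisting of jobs of
equal penalty sorted in non-increasing order of processing time, any feasible solution
rejecting exactly `k i` jobs from each group `B i` can be turned into a feasible
solution, of cost at most as large, that rejects from each `B i` exactly its first
`k i` jobs (those of largest processing time). -/
theorem stmt17 {ι : Type*} [DecidableEq ι] (m : ℕ) [NeZero m] (d : ℕ)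
    (J : Finset ι) (p e : ι → ℝ) (U : ℝ)
    (hp : ∀ j ∈ J, 0 ≤ p j)
    (B : Fin d → List ι) (k : Fin d → ℕ)
    (hBJ : ∀ i, ∀ j ∈ B i, j ∈ J)
    (hnd : ∀ i, (B i).Nodup)
    (hdisj : ∀ i i', i ≠ i' → ∀ j ∈ B i, j ∉ B i')
    (hpen : ∀ i, ∀ j ∈ B i, ∀ j' ∈ B i, e j = e j')
    (hsorted : ∀ i, (B i).Pairwise (fun a b => p b ≤ p a))
    (σ : ι → Option (Fin m))
    (hfeas : ∑ j ∈ J.filter (fun j => σ j ≠ none), p j ≤ U)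
    (hrej : ∀ i, ((B i).filter (fun j => σ j = none)).length = k i) :
    ∃ σ' : ι → Option (Fin m),
      (∑ j ∈ J.filter (fun j => σ' j ≠ none), p j ≤ U)
      ∧ ((Finset.univ.sup' Finset.univ_nonempty
            (fun i => ∑ j ∈ J.filter (fun j => σ' j = some i), p j))
          + ∑ j ∈ J.filter (fun j => σ' j = none), e j
          ≤ (Finset.univ.sup' Finset.univ_nonempty
            (fun i => ∑ j ∈ J.filter (fun j => σ j = some i), p j))
          + ∑ j ∈ J.filter (fun j => σ j = none), e j)
      ∧ (∀ i, ∀ j ∈ B i, (σ' j = none ↔ j ∈ (B i).take (k i))) :=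
  stmt17_general m d J p e U B k hBJ hnd hdisj hpen hsorted σ hfeas hrej
end
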